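/- Let G = (V,E) be a weighted directed graph with integer weights admitting a valid potential function π, and suppose vertices u and v both lie on a common zero-weight cycle of G. Then wSP(u,v) = π(v) − π(u). -/

import Mathlib

namespace UTVPIPaper

/-- `IsPath E u p v`: `p` is a path (a sequence of consecutive weighted edges,
each belonging to the edge set `E`) from vertex `u` to vertex `v`. -/
inductive IsPath {V : Type*} (E : Set (V × V × ℤ)) : V → List (V × V × ℤ) → V → Prop
  | nil (v : V) : IsPath E v [] v
  | cons {u v w : V} {d : ℤ} {p : List (V × V × ℤ)} :
      (u, v, d) ∈ E → IsPath E v p w → IsPath E u ((u, v, d) :: p) w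

/-- The weight of a path: the sum of the weights of its edges. -/
def pweight {V : Type*} (p : List (V × V × ℤ)) : ℤ := (p.map fun e => e.2.2).sum

/-- The graph `E` has no negative weight cycle. -/
def NoNegCycle {V : Type*} (E : Set (V × V × ℤ)) : Prop :=
  ∀ (v : V) (p : List (V × V × ℤ)), IsPath E v p v → 0 ≤ pweight p

/-- `wSP E u v` is the minimum weight of a path from `u` to `v` in `E`
(`⊤` if no path exists). -/
noncomputable def wSP {V : Type*} (E : Set (V × V × ℤ)) (u v : V) : WithTop ℤ :=
  sInf {w : WithTop ℤ | ∃ p, IsPath E u p v ∧ (pweight p : WithTop ℤ) = w}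


/-- `π` is a valid potential function for the graph `E`:
`π(u) + d - π(v) ≥ 0` for every edge `(u, v, d)`. -/
def ValidPotential {V : Type*} (E : Set (V × V × ℤ)) (π : V → ℤ) : Prop :=
  ∀ e ∈ E, 0 ≤ π e.1 + e.2.2 - π e.2.1

lemma pweight_append {V : Type*} (p q : List (V × V × ℤ)) :
    pweight (p ++ q) = pweight p + pweight q := by
  simp [pweight]

lemma IsPath.append {V : Type*} {E : Set (V × V × ℤ)} {a b c : V}
    {p q : List (V × V × ℤ)} (hp : IsPath E a p b) (hq : IsPath E b q c) :
    IsPath E a (p ++ q) c := by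
  induction hp with
  | nil => simpa
  | cons he _ ih => exact IsPath.cons he (ih hq)

lemma IsPath.mem_E {V : Type*} {E : Set (V × V × ℤ)} {a b : V}
    {p : List (V × V × ℤ)} (hp : IsPath E a p b) :
    ∀ e ∈ p, e ∈ E := by
  induction hp with
  | nil => simp
  | cons he _ ih =>
    intro e hmem
    rcases List.mem_cons.1 hmem with h | h
    · exact h ▸ he
    · exact ih e h

lemma IsPath.split {V : Type*} {E : Set (V × V × ℤ)} {a b x : V}
    {p : List (V × V × ℤ)} (hp : IsPath E a p b) (hx : x ∈ p.map (fun e => e.1)) :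
    ∃ p₁ p₂, p = p₁ ++ p₂ ∧ IsPath E a p₁ x ∧ IsPath E x p₂ b := by
  induction hp with
  | nil => simp at hx
  | @cons u v w d p he hp ih =>
    simp only [List.map_cons, List.mem_cons] at hx
    rcases hx with h | h
    · subst h
      exact ⟨[], _, rfl, IsPath.nil _, IsPath.cons he hp⟩
    · obtain ⟨p₁, p₂, heq, h1, h2⟩ := ih h
      exact ⟨(u, v, d) :: p₁, p₂, by rw [heq]; rfl, IsPath.cons he h1, h2⟩

lemma pweight_lower {V : Type*} {E : Set (V × V × ℤ)} {π : V → ℤ}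
    (hπ : ValidPotential E π) {a b : V} {p : List (V × V × ℤ)}
    (hp : IsPath E a p b) : π b - π a ≤ pweight p := by
  induction hp with
  | nil => simp [pweight]
  | @cons u v w d p he _ ih =>
    have := hπ _ he
    simp only [pweight, List.map_cons, List.sum_cons] at *
    omega

lemma pweight_tight {V : Type*} {E : Set (V × V × ℤ)} {π : V → ℤ}
    {a b : V} {p : List (V × V × ℤ)} (hp : IsPath E a p b)
    (ht : ∀ e ∈ p, π e.1 + e.2.2 - π e.2.1 = 0) : pweight p = π b - π a := by
  induction hp with
  | nil => simp [pweight]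
  | @cons u v w d p he hq ih =>
    have h1 := ht (u, v, d) List.mem_cons_self
    have h2 := ih (fun e he' => ht e (List.mem_cons_of_mem _ he'))
    simp only [pweight, List.map_cons, List.sum_cons] at *
    omega

lemma slack_sum {V : Type*} {E : Set (V × V × ℤ)} {π : V → ℤ}
    {a b : V} {p : List (V × V × ℤ)} (hp : IsPath E a p b) :
    (p.map (fun e => π e.1 + e.2.2 - π e.2.1)).sum = pweight p + π a - π b := by
  induction hp with
  | nil => simp [pweight]
  | @cons u v w d p he hq ih =>
    simp only [pweight, List.map_cons, List.sum_cons] at *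
    omega

lemma list_sum_zero {l : List ℤ} (h : ∀ x ∈ l, 0 ≤ x) (hs : l.sum = 0) :
    ∀ x ∈ l, x = 0 := by
  induction l with
  | nil => simp
  | cons a l ih =>
    simp only [List.sum_cons] at hs
    have ha := h a List.mem_cons_self
    have hl : 0 ≤ l.sum := List.sum_nonneg (fun x hx => h x (List.mem_cons_of_mem _ hx))
    intro x hx
    rcases List.mem_cons.1 hx with h' | h'
    · omega
    · exact ih (fun y hy => h y (List.mem_cons_of_mem _ hy)) (by omega) x h'

lemma cycle_tight {V : Type*} {E : Set (V × V × ℤ)} {π : V → ℤ}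
    (hπ : ValidPotential E π) {a : V} {p : List (V × V × ℤ)}
    (hp : IsPath E a p a) (hw : pweight p = 0) :
    ∀ e ∈ p, π e.1 + e.2.2 - π e.2.1 = 0 := by
  have hs := slack_sum (π := π) hp
  rw [hw] at hs
  simp only [zero_add, sub_self] at hs
  intro e he
  have := list_sum_zero (l := p.map (fun e => π e.1 + e.2.2 - π e.2.1))
    (by intro x hx
        obtain ⟨e', he', rfl⟩ := List.mem_map.1 hx
        exact hπ _ (hp.mem_E e' he'))
    hs _ (List.mem_map_of_mem he)
  exact this

/-- Let `π` be a valid potential function for `G = (V, E)` and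
suppose `u` and `v` both lie on a common zero-weight cycle of `G`. Then
`wSP(u, v) = π(v) - π(u)`. -/
theorem wSP_eq_potential_diff_of_zero_cycle {V : Type*}
    (E : Set (V × V × ℤ)) (π : V → ℤ) (hπ : ValidPotential E π) (u v : V)
    (h : ∃ (a : V) (p : List (V × V × ℤ)),
      IsPath E a p a ∧ p ≠ [] ∧ pweight p = 0 ∧
      u ∈ p.map (fun e => e.1) ∧ v ∈ p.map (fun e => e.1)) :
    wSP E u v = ((π v - π u : ℤ) : WithTop ℤ) := by
  obtain ⟨a, p, hcyc, -, hw0, hu, hv⟩ := h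
  have htight := cycle_tight hπ hcyc hw0
  -- split the cycle at u
  obtain ⟨p₁, p₂, rfl, h1, h2⟩ := hcyc.split hu
  -- rotated cycle from u
  have hrot : IsPath E u (p₂ ++ p₁) u := h2.append h1
  have hvrot : v ∈ (p₂ ++ p₁).map (fun e => e.1) := by
    simp only [List.map_append, List.mem_append] at hu hv ⊢
    tauto
  obtain ⟨q₁, q₂, heq, hq1, hq2⟩ := hrot.split hvrot
  have hq1tight : ∀ e ∈ q₁, π e.1 + e.2.2 - π e.2.1 = 0 := by
    intro e he
    apply htight
    have : e ∈ p₂ ++ p₁ := heq ▸ List.mem_append_left _ he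
    simp only [List.mem_append] at this ⊢
    tauto
  have hq1w : pweight q₁ = π v - π u := pweight_tight hq1 hq1tight
  unfold wSP
  have hlb : ((π v - π u : ℤ) : WithTop ℤ) ∈
      lowerBounds {w : WithTop ℤ | ∃ p, IsPath E u p v ∧ (pweight p : WithTop ℤ) = w} := by
    rintro w ⟨p', hp', rfl⟩
    exact_mod_cast pweight_lower hπ hp'
  apply le_antisymm
  · exact csInf_le ⟨_, hlb⟩ ⟨q₁, hq1, by rw [hq1w]⟩
  · exact le_csInf ⟨_, q₁, hq1, rfl⟩ hlb

end UTVPIPaper
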